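/- arXiv:1312.6582 — 2 statements merged into one kernel-verified Lean document; each statement's English description precedes it below -/
import Mathlib

section
/- Let $p$ be a prime and $k$ a positive integer with $\gcd(p,k)=1$, i.e., $p \nmid k$. Let $\omega_2,\ldots,\omega_k \in \mathbb{C}$ be arbitrary $p$-th roots of unity. Then $1 + \sum_{i=2}^{k} \omega_i \neq 0$. -/
open Polynomial

theorem stmt_5 (p k : ℕ) (hp : p.Prime) (hk : 0 < k) (hpk : ¬ p ∣ k)
    (ω : Fin (k - 1) → ℂ) (hω : ∀ i, ω i ^ p = 1) :
    1 + ∑ i, ω i ≠ 0 := by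
  intro h
  have hζ : IsPrimitiveRoot (Complex.exp (2 * Real.pi * Complex.I / p)) p :=
    Complex.isPrimitiveRoot_exp p hp.ne_zero
  set ζ := Complex.exp (2 * Real.pi * Complex.I / p) with hζdef
  have hpow : ∀ i, ∃ m, ζ ^ m = ω i := by
    intro i
    haveI : NeZero p := ⟨hp.ne_zero⟩
    obtain ⟨m, _, hm⟩ := hζ.eq_pow_of_pow_eq_one (hω i)
    exact ⟨m, hm⟩
  choose a ha using hpow
  set Q : ℤ[X] := (∑ i, X ^ (a i)) + 1 with hQ
  have haev : aeval ζ Q = 0 := by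
    simp only [hQ, map_add, map_sum, map_pow, map_one, aeval_X]
    simp only [ha]
    rw [add_comm] at h
    exact_mod_cast h
  have hmin : cyclotomic p ℤ = minpoly ℤ ζ := cyclotomic_eq_minpoly hζ hp.pos
  have hdvd : cyclotomic p ℤ ∣ Q := by
    rw [hmin]
    exact minpoly.isIntegrallyClosed_dvd (hζ.isIntegral hp.pos) haev
  have hev : (cyclotomic p ℤ).eval 1 ∣ Q.eval 1 := eval_dvd hdvd
  haveI : Fact p.Prime := ⟨hp⟩
  rw [eval_one_cyclotomic_prime] at hev
  have hQ1 : Q.eval 1 = (k : ℤ) := by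
    simp only [hQ, eval_add, eval_finset_sum, eval_pow, eval_X, eval_one, one_pow,
      Finset.sum_const, Finset.card_univ, Fintype.card_fin, nsmul_eq_mul, mul_one]
    omega
  rw [hQ1] at hev
  exact hpk (Int.ofNat_dvd.mp hev)
end

section
/- (Special case $\omega = 1$ of Lemma on general position.) Let $\mathcal{P} = \{P_1,\ldots,P_s\} \subset \mathbb{R}[X_1,\ldots,X_k]$ be symmetric polynomials of degree at most $d$, and let $\varepsilon_1,\ldots,\varepsilon_s$ be elements of a real closed extension $\mathbb{R}'$ of $\mathbb{R}$ that are algebraically independent over $\mathbb{R}$. Then any subcollection of $\{P_i \pm \varepsilon_i : 1 \le i \le s\}$ of cardinality greater than $\min(k,d)$ has empty common zero set in $\mathbb{R}'^k$. -/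
/-!
By the fundamental theorem, a symmetric `P` is `Q(e₁, …, e_k)` for the elementary symmetric
polynomials `eⱼ`. Giving the variable of `eⱼ` the weight `j`, the weight-`n` part of `Q` is sent to
the degree-`n` part of `P`; since the `eⱼ` are algebraically independent, `deg P ≤ d` forces `Q` to
have weight at most `d`, so only `e₁, …, e_min(k,d)` occur.

At a common zero `x`, each `εᵢ = ∓Pᵢ(x)` therefore lies in the `ℝ`-algebra generated by the
`min(k,d)` values `eⱼ(x)`. Lifting to polynomials, more than `min(k,d)` algebraically independent
elements there would give as many algebraically independent polynomials in `min(k,d)` variables,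
exceeding the transcendence degree.
-/

open MvPolynomial

namespace MvPolynomial

variable {σ τ R : Type*}

section CommSemiring

variable [CommSemiring R]

theorem isHomogeneous_esymm [Fintype σ] (n : ℕ) : (esymm σ R n).IsHomogeneous n := by
  refine IsHomogeneous.sum _ _ _ fun t ht => ?_
  convert IsHomogeneous.prod t _ _ fun i _ => isHomogeneous_X R i
  simp [(Finset.mem_powersetCard.1 ht).2]

theorem isHomogeneous_aeval_monomial {w : τ → ℕ} {g : τ → MvPolynomial σ R}
    (hg : ∀ i, (g i).IsHomogeneous (w i)) (t : τ →₀ ℕ) (c : R) :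
    (aeval g (monomial t c)).IsHomogeneous (Finsupp.weight w t) := by
  rw [aeval_monomial, Finsupp.prod, algebraMap_eq]
  convert (isHomogeneous_C σ c).mul (IsHomogeneous.prod t.support _ _ fun i _ => (hg i).pow (t i))
  rw [zero_add, Finsupp.weight_apply, Finsupp.sum]
  simp [mul_comm]

theorem homogeneousComponent_aeval {w : τ → ℕ} {g : τ → MvPolynomial σ R}
    (hg : ∀ i, (g i).IsHomogeneous (w i)) (n : ℕ) (Q : MvPolynomial τ R) :
    homogeneousComponent n (aeval g Q) = aeval g (weightedHomogeneousComponent w n Q) := by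
  classical
  induction Q using MvPolynomial.induction_on' with
  | monomial t c =>
    rw [homogeneousComponent_of_mem (isHomogeneous_aeval_monomial hg t c),
      weightedHomogeneousComponent_of_mem (isWeightedHomogeneous_monomial w t c rfl)]
    split_ifs <;> simp
  | add p q hp hq => simp only [map_add, hp, hq]

end CommSemiring

theorem exists_aeval_esymm_eq_of_isSymmetric [CommRing R] {k d : ℕ} {P : MvPolynomial (Fin k) R}
    (hP : P.IsSymmetric) (hd : P.totalDegree ≤ d) :
    ∃ Q : MvPolynomial (Fin (min k d)) R,
      aeval (fun j : Fin (min k d) => esymm (Fin k) R (j + 1)) Q = P := by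
  set e : Fin k → MvPolynomial (Fin k) R := fun i => esymm (Fin k) R (i + 1)
  have he : ∀ Q, (esymmAlgHom (Fin k) R k Q : MvPolynomial (Fin k) R) = aeval e Q :=
    fun _ => esymmAlgHom_apply _
  obtain ⟨Q, hQ⟩ := (esymmAlgHom_fin_bijective R k).2 ⟨P, hP⟩
  replace hQ : aeval e Q = P := (he Q).symm.trans (congrArg Subtype.val hQ)
  have hinj : Function.Injective (aeval e : MvPolynomial (Fin k) R →ₐ[R] _) := by
    intro p q hpq
    apply (esymmAlgHom_fin_bijective R k).1
    exact Subtype.ext (by rw [he, he, hpq])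
  set w : Fin k → ℕ := fun i => i + 1
  have hvanish : ∀ n, d < n → weightedHomogeneousComponent w n Q = 0 := fun n hn => hinj <| by
    rw [← homogeneousComponent_aeval (fun i => isHomogeneous_esymm _), map_zero, hQ]
    exact homogeneousComponent_eq_zero n P (hd.trans_lt hn)
  have hweight : ∀ t ∈ Q.support, Finsupp.weight w t ≤ d := by
    intro t ht
    by_contra! h
    classical
    have := coeff_weightedHomogeneousComponent (w := w) (Finsupp.weight w t) Q t
    rw [hvanish _ h, if_pos rfl, coeff_zero] at this
    exact mem_support_iff.1 ht this.symm
  have hvars : (Q.vars : Set (Fin k)) ⊆ Set.range (Fin.castLE (min_le_left k d)) := by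
    intro i hi
    obtain ⟨t, ht, hit⟩ := (mem_vars_iff_mem_support i).1 hi
    have : i.val + 1 ≤ d :=
      (Finsupp.le_weight_of_ne_zero' w (Finsupp.mem_support_iff.1 hit)).trans (hweight t ht)
    exact ⟨⟨i, lt_min i.2 (by omega)⟩, rfl⟩
  obtain ⟨Q', rfl⟩ := exists_rename_eq_of_vars_subset_range Q _ (Fin.castLE_injective _) hvars
  exact ⟨Q', by rw [← hQ, aeval_rename]; rfl⟩

end MvPolynomial

theorem AlgebraicIndependent.card_le_of_forall_mem_adjoin {R A ι κ : Type*} [CommRing R]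
    [IsDomain R] [CommRing A] [Algebra R A] [Fintype ι] [Fintype κ] {x : κ → A}
    (hx : AlgebraicIndependent R x) {y : ι → A} (hxy : ∀ i, x i ∈ Algebra.adjoin R (Set.range y)) :
    Fintype.card κ ≤ Fintype.card ι := by
  rw [Algebra.adjoin_range_eq_range_aeval] at hxy
  choose G hG using hxy
  have hG : AlgebraicIndependent R G :=
    .of_comp (aeval y) (by convert hx using 1; exact funext hG)
  simpa using hG.lift_cardinalMk_le_trdeg

theorem stmt_14_general (k d s : ℕ) (P : Fin s → MvPolynomial (Fin k) ℝ)
    (hsym : ∀ i (σ : Equiv.Perm (Fin k)), rename ⇑σ (P i) = P i)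
    (hdeg : ∀ i, (P i).totalDegree ≤ d)
    (R' : Type*) [Field R'] [Algebra ℝ R']
    (ε : Fin s → R') (hind : AlgebraicIndependent ℝ ε)
    (T : Finset (Fin s)) (hT : min k d < T.card)
    (sgn : Fin s → R') (hsgn : ∀ i, sgn i = 1 ∨ sgn i = -1) :
    ¬ ∃ x : Fin k → R', ∀ i ∈ T, aeval x (P i) + sgn i * ε i = 0 := by
  rintro ⟨x, hx⟩
  choose Q hQ using fun i => exists_aeval_esymm_eq_of_isSymmetric (hsym i) (hdeg i)
  set y : Fin (min k d) → R' := fun j => aeval x (esymm (Fin k) ℝ (j + 1))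
  have hmem : ∀ i : T, ε i ∈ Algebra.adjoin ℝ (Set.range y) := by
    rintro ⟨i, hi⟩
    have hsq : sgn i * sgn i = 1 := by rcases hsgn i with h | h <;> rw [h] <;> ring
    have hε : ε i = -(sgn i * aeval y (Q i)) := by
      rw [← comp_aeval_apply, hQ]
      linear_combination sgn i * hx i hi - ε i * hsq
    have hsgn_mem : sgn i ∈ Algebra.adjoin ℝ (Set.range y) := by
      rcases hsgn i with h | h <;> rw [h]
      exacts [one_mem _, neg_mem (one_mem _)]
    rw [hε]
    refine neg_mem (mul_mem hsgn_mem ?_)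
    rw [Algebra.adjoin_range_eq_range_aeval]
    exact ⟨Q i, rfl⟩
  have := (hind.comp _ Subtype.val_injective).card_le_of_forall_mem_adjoin hmem
  simp only [Fintype.card_coe, Fintype.card_fin] at this
  omega

theorem stmt_14 (k d s : ℕ) (P : Fin s → MvPolynomial (Fin k) ℝ)
    (hsym : ∀ i (σ : Equiv.Perm (Fin k)), rename ⇑σ (P i) = P i)
    (hdeg : ∀ i, (P i).totalDegree ≤ d)
    (R' : Type*) [Field R'] [LinearOrder R'] [IsStrictOrderedRing R'] [Algebra ℝ R']
    (ε : Fin s → R') (hind : AlgebraicIndependent ℝ ε)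
    (T : Finset (Fin s)) (hT : min k d < T.card)
    (sgn : Fin s → R') (hsgn : ∀ i, sgn i = 1 ∨ sgn i = -1) :
    ¬ ∃ x : Fin k → R', ∀ i ∈ T, aeval x (P i) + sgn i * ε i = 0 :=
  stmt_14_general k d s P hsym hdeg R' ε hind T hT sgn hsgn
end
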